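/- Let M = I − F*, let w ∈ ℝ^{nm} be the entrywise-positive left null vector of B M + L* (i.e. w^T (B M + L*) = 0) normalized so that max_k w_k = 1, let W = diag(w), let s = min over all pairs (i,α) of (δ^α_i − β^α_i), and let λ₂ be the second smallest eigenvalue of the symmetric matrix (1/2)(W (B M + L*) + (B M + L*)^T W). Assume B M + L* is irreducible and that not all differences δ^α_i − β^α_i equal s (so Σ_{(α,i)} w_{(α,i)} (δ^α_i − β^α_i − s) > 0). If λ₂ / ((1 + √(1 + λ₂ / Σ_{(α,i)} w_{(α,i)} (δ^α_i − β^α_i − s)))² · nm + 1) + s ≥ 0, then the spectral abscissa satisfies μ(B F* − D − L*) ≤ 0. -/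

import Mathlib

open Matrix BigOperators Finset

/-- Spectral abscissa of a real square matrix: the maximum of the real parts of its
(complex) eigenvalues. -/
noncomputable def specAbscissa {k : Type*} [Fintype k] [DecidableEq k]
    (M : Matrix k k ℝ) : ℝ :=
  sSup {r : ℝ | ∃ z ∈ spectrum ℂ (M.map Complex.ofReal), z.re = r}

/-- Diagonal `nm × nm` matrix (indexed by pairs `(α, i)`) built from rates `c^α_i`. -/
noncomputable def pairDiag {n m : ℕ} (c : Fin m → Fin n → ℝ) :
    Matrix (Fin m × Fin n) (Fin m × Fin n) ℝ :=
  Matrix.diagonal fun q => c q.1 q.2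

/-- The equilibrium dispersal Laplacian `L*`: block-diagonal, whose `α`-th `n × n` block
has `(i,i)` entry `ν^α_i = ∑_{j ≠ i} q^α_{ij}` and `(i,j)` entry `-q^α_{ji} π^α_j / π^α_i`
for `j ≠ i`. -/
noncomputable def Lstar {n m : ℕ} (Q : Fin m → Matrix (Fin n) (Fin n) ℝ)
    (piv : Fin m → Fin n → ℝ) : Matrix (Fin m × Fin n) (Fin m × Fin n) ℝ :=
  Matrix.of fun q q' =>
    if q.1 = q'.1 then
      (if q.2 = q'.2 then ∑ j ∈ Finset.univ \ {q.2}, Q q.1 q.2 j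
       else -(Q q.1 q'.2 q.2 * piv q.1 q'.2 / piv q.1 q.2))
    else 0

/-- The equilibrium population-fraction matrix `F*`: the `(α,σ)` block is the diagonal
matrix with entries `f^{*σ}_i = N^σ π^σ_i / ∑_τ N^τ π^τ_i` (the same row of blocks
repeated for every `α`). -/
noncomputable def Fstar {n m : ℕ} (N : Fin m → ℝ) (piv : Fin m → Fin n → ℝ) :
    Matrix (Fin m × Fin n) (Fin m × Fin n) ℝ :=
  Matrix.of fun q q' =>
    if q.2 = q'.2 then N q'.1 * piv q'.1 q.2 / ∑ τ, N τ * piv τ q.2 else 0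

/-- The Laplacian-type matrix `K = B M + L*` with `M = I − F*`. -/
noncomputable def Kmat {n m : ℕ} (Q : Fin m → Matrix (Fin n) (Fin n) ℝ)
    (piv : Fin m → Fin n → ℝ) (N : Fin m → ℝ) (β : Fin m → Fin n → ℝ) :
    Matrix (Fin m × Fin n) (Fin m × Fin n) ℝ :=
  pairDiag β * (1 - Fstar N piv) + Lstar Q piv

/-- The symmetrized weighted matrix `S = (1/2)(W K + Kᵀ W)` with `W = diag(w)`. -/
noncomputable def Smat {n m : ℕ} (Q : Fin m → Matrix (Fin n) (Fin n) ℝ)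
    (piv : Fin m → Fin n → ℝ) (N : Fin m → ℝ) (β : Fin m → Fin n → ℝ)
    (w : Fin m × Fin n → ℝ) : Matrix (Fin m × Fin n) (Fin m × Fin n) ℝ :=
  ((1 : ℝ) / 2) • (Matrix.diagonal w * Kmat Q piv N β
    + (Kmat Q piv N β)ᵀ * Matrix.diagonal w)

/-!
Write `A = B F* − D − L* = −K − diag(δ − β)` with `K = B M + L*`. If `A v = z v`, pairing with
`W v̄` gives `Re z · ∑ w |v|² = −Φ(Re v) − Φ(Im v)`, where
`Φ(x) = xᵀ S x + ∑ w (δ − β) x²`, so it suffices that `Φ ≥ 0`. The matrix `S` is a symmetric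
Laplacian, hence positive semidefinite by Gershgorin, which settles the case `s ≥ 0`. For
`s < 0`, split `x = a 𝟙 + y` with `y ⊥ 𝟙`: the spectral gap gives `yᵀ S y ≥ λ₂ |y|²`, each
`|x_i|` is at least `|a| − |y|`, and `w ≤ 1`; this bounds `Φ(x)` below by a quadratic form in
`(|a|, |y|)` that the condition on `λ₂` makes nonnegative.
-/

section

variable {ι : Type*} [Fintype ι]

theorem Matrix.re_star_dotProduct_map_ofReal_mulVec (M : Matrix ι ι ℝ) (v : ι → ℂ) :
    (star v ⬝ᵥ M.map Complex.ofReal *ᵥ v).re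
      = (fun i => (v i).re) ⬝ᵥ M *ᵥ (fun i => (v i).re)
        + (fun i => (v i).im) ⬝ᵥ M *ᵥ (fun i => (v i).im) := by
  simp only [dotProduct, mulVec, Complex.re_sum, mul_sum, ← sum_add_distrib]
  refine sum_congr rfl fun i _ => sum_congr rfl fun j _ => ?_
  simp only [Pi.star_apply, map_apply, Complex.mul_re, Complex.star_def, Complex.conj_re,
    Complex.conj_im, Complex.ofReal_re, Complex.ofReal_im, Complex.mul_im]
  ring

theorem Matrix.IsHermitian.dotProduct_add_mulVec_add {A : Matrix ι ι ℝ} (hA : A.IsHermitian)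
    {u : ι → ℝ} (hu : A *ᵥ u = 0) (x : ι → ℝ) :
    (x + u) ⬝ᵥ A *ᵥ (x + u) = x ⬝ᵥ A *ᵥ x := by
  have hT : Aᵀ = A := by rw [← conjTranspose_eq_transpose_of_trivial]; exact hA
  rw [mulVec_add, hu, add_zero, add_dotProduct, ← dotProduct_transpose_mulVec A x u, hT, hu,
    dotProduct_zero, add_zero]

theorem sq_max_abs_sub_sqrt_le (a : ℝ) (y : ι → ℝ) (i : ι) :
    max 0 (|a| - √(y ⬝ᵥ y)) ^ 2 ≤ (y i + a) ^ 2 := by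
  have hyi : |y i| ≤ √(y ⬝ᵥ y) := Real.abs_le_sqrt <| by
    simpa [dotProduct, sq] using single_le_sum (fun j _ => mul_self_nonneg (y j)) (mem_univ i)
  have h : max 0 (|a| - √(y ⬝ᵥ y)) ≤ |y i + a| :=
    max_le (abs_nonneg _) (by rw [add_comm]; linarith [abs_sub_abs_le_abs_add a (y i)])
  simpa [sq_abs] using pow_le_pow_left₀ (le_max_left _ _) h 2

theorem weighted_sum_sq_lower_bound {w d x : ι → ℝ} {s m : ℝ} (hw0 : ∀ i, 0 ≤ w i)
    (hw1 : ∀ i, w i ≤ 1) (hs : ∀ i, s ≤ d i) (hs0 : s ≤ 0) (hm : ∀ i, m ^ 2 ≤ x i ^ 2) :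
    (∑ i, w i * (d i - s)) * m ^ 2 + s * (x ⬝ᵥ x) ≤ ∑ i, w i * d i * x i ^ 2 := by
  have hterm : ∀ i, w i * (d i - s) * m ^ 2 + s * (x i * x i) ≤ w i * d i * x i ^ 2 := fun i => by
    nlinarith [mul_le_mul_of_nonneg_left (hm i) (mul_nonneg (hw0 i) (sub_nonneg.2 (hs i))),
      mul_nonneg (sub_nonneg.2 (hw1 i)) (mul_nonneg (neg_nonneg.2 hs0) (sq_nonneg (x i)))]
  calc (∑ i, w i * (d i - s)) * m ^ 2 + s * (x ⬝ᵥ x)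
      = ∑ i, (w i * (d i - s) * m ^ 2 + s * (x i * x i)) := by
        rw [sum_add_distrib, ← sum_mul, ← mul_sum]; rfl
    _ ≤ ∑ i, w i * d i * x i ^ 2 := sum_le_sum fun i _ => hterm i

theorem quadratic_bound_of_gap_condition {R lam c N a u : ℝ} (hR : 0 < R) (hc : 0 < c)
    (hN : 0 ≤ N) (ha : 0 ≤ a) (hcond : c * ((1 + √(1 + lam / R)) ^ 2 * N + 1) ≤ lam) :
    c * (N * a ^ 2 + u ^ 2) ≤ lam * u ^ 2 + R * max 0 (a - u) ^ 2 := by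
  set σ := √(1 + lam / R)
  have hσ0 : 0 ≤ σ := Real.sqrt_nonneg _
  have hcN : 0 ≤ c * N := mul_nonneg hc.le hN
  have hlam : c * N + c ≤ lam := by nlinarith [mul_nonneg hcN (sq_nonneg σ)]
  rcases le_or_gt a u with hau | hua
  · have hmax : max 0 (a - u) = 0 := max_eq_left (sub_nonpos.2 hau)
    nlinarith [mul_nonneg hcN (sub_nonneg.2 (pow_le_pow_left₀ ha hau 2))]
  · rw [max_eq_right (sub_nonneg.2 hua.le)]
    have hσR : R * σ ^ 2 = R + lam := by
      rw [Real.sq_sqrt (by have := div_pos (by linarith : 0 < lam) hR; linarith)]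
      field_simp
    set P := lam - c + R
    have hP : 0 < P := by linarith
    have hkey : c * N * P ≤ (lam - c) * R :=
      calc c * N * P ≤ c * N * (R * σ ^ 2) := by gcongr; linarith
        _ ≤ c * N * (R * (1 + σ) ^ 2) := by gcongr; linarith
        _ ≤ (lam - c) * R := by nlinarith
    -- `P * (rhs - lhs) = (P u - R a)² + ((lam - c) R - c N P) a²`
    have : 0 ≤ P * (lam * u ^ 2 + R * (a - u) ^ 2 - c * (N * a ^ 2 + u ^ 2)) := by
      nlinarith [sq_nonneg (P * u - R * a), mul_nonneg (sub_nonneg.2 hkey) (sq_nonneg a)]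
    nlinarith [(mul_nonneg_iff_of_pos_left hP).1 this]

variable [DecidableEq ι]

theorem Matrix.exists_mulVec_eq_smul_of_mem_spectrum {M : Matrix ι ι ℂ} {z : ℂ}
    (hz : z ∈ spectrum ℂ M) : ∃ v : ι → ℂ, v ≠ 0 ∧ M *ᵥ v = z • v := by
  rw [← spectrum_toLin', ← Module.End.hasEigenvalue_iff_mem_spectrum] at hz
  obtain ⟨v, hv⟩ := hz.exists_hasEigenvector
  exact ⟨v, hv.2, by simpa using hv.apply_eq_smul⟩

theorem specAbscissa_nonpos_of_dotProduct_diagonal_mul_mulVec_nonpos {A : Matrix ι ι ℝ}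
    {w : ι → ℝ} (hw : ∀ i, 0 < w i) (hA : ∀ x, x ⬝ᵥ (diagonal w * A) *ᵥ x ≤ 0) :
    specAbscissa A ≤ 0 := by
  refine Real.sSup_le ?_ le_rfl
  rintro _ ⟨z, hz, rfl⟩
  obtain ⟨v, hv0, hv⟩ := exists_mulVec_eq_smul_of_mem_spectrum hz
  have hpos : 0 < ∑ i, w i * Complex.normSq (v i) := by
    obtain ⟨i, hi⟩ := Function.ne_iff.1 hv0
    exact sum_pos' (fun j _ => mul_nonneg (hw j).le (Complex.normSq_nonneg _))
      ⟨i, mem_univ i, mul_pos (hw i) (Complex.normSq_pos.2 hi)⟩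
  have hre : (star v ⬝ᵥ (diagonal w * A).map Complex.ofReal *ᵥ v).re
      = z.re * ∑ i, w i * Complex.normSq (v i) := by
    have hmap : (diagonal w * A).map Complex.ofReal
        = diagonal (fun i => (w i : ℂ)) * A.map Complex.ofReal := by
      ext i j; simp [diagonal_mul]
    rw [hmap, ← mulVec_mulVec, hv]
    simp only [dotProduct, mulVec_diagonal, Pi.smul_apply, smul_eq_mul, Complex.re_sum,
      mul_sum, Pi.star_apply]
    refine sum_congr rfl fun i _ => ?_
    simp only [Complex.mul_re, Complex.star_def, Complex.conj_re, Complex.conj_im,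
      Complex.ofReal_re, Complex.ofReal_im, Complex.mul_im, Complex.normSq_apply]
    ring
  rw [re_star_dotProduct_map_ofReal_mulVec] at hre
  nlinarith [hA fun i => (v i).re, hA fun i => (v i).im]

theorem Matrix.unitary_star_mulVec_dotProduct (U : unitaryGroup ι ℝ) (x y : ι → ℝ) :
    (star (U : Matrix ι ι ℝ) *ᵥ x) ⬝ᵥ (star (U : Matrix ι ι ℝ) *ᵥ y) = x ⬝ᵥ y := by
  rw [dotProduct_mulVec, star_eq_conjTranspose, conjTranspose_eq_transpose_of_trivial,
    ← mulVec_transpose, transpose_transpose, mulVec_mulVec,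
    ← conjTranspose_eq_transpose_of_trivial, ← star_eq_conjTranspose,
    Unitary.mul_star_self_of_mem U.2, one_mulVec]

namespace Matrix.IsHermitian

variable {A : Matrix ι ι ℝ} (hA : A.IsHermitian)

theorem star_eigenvectorUnitary_mulVec_mulVec (x : ι → ℝ) :
    star (hA.eigenvectorUnitary : Matrix ι ι ℝ) *ᵥ A *ᵥ x
      = diagonal hA.eigenvalues *ᵥ star (hA.eigenvectorUnitary : Matrix ι ι ℝ) *ᵥ x := by
  conv_lhs => arg 2; arg 1; rw [hA.spectral_theorem]
  simp [Unitary.conjStarAlgAut_apply, RCLike.ofReal_real_eq_id, mulVec_mulVec, ← mul_assoc]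

theorem dotProduct_mulVec_eq_sum_eigenvalues (x : ι → ℝ) :
    x ⬝ᵥ A *ᵥ x
      = ∑ i, hA.eigenvalues i * (star (hA.eigenvectorUnitary : Matrix ι ι ℝ) *ᵥ x) i ^ 2 := by
  rw [← unitary_star_mulVec_dotProduct hA.eigenvectorUnitary,
    star_eigenvectorUnitary_mulVec_mulVec, dotProduct]
  congr! 1 with i
  rw [mulVec_diagonal]; ring

theorem mul_dotProduct_self_le_dotProduct_mulVec {u x : ι → ℝ} (hu : A *ᵥ u = 0)
    (hu0 : u ≠ 0) (hxu : x ⬝ᵥ u = 0) {q₀ : ι} {lam : ℝ} (hlam : 0 < lam)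
    (hgap : ∀ i ≠ q₀, lam ≤ hA.eigenvalues i) :
    lam * (x ⬝ᵥ x) ≤ x ⬝ᵥ A *ᵥ x := by
  set V : Matrix ι ι ℝ := star (hA.eigenvectorUnitary : Matrix ι ι ℝ)
  have hVu : ∀ i ≠ q₀, (V *ᵥ u) i = 0 := by
    intro i hi
    have h := congrFun (hA.star_eigenvectorUnitary_mulVec_mulVec u) i
    rw [hu, mulVec_zero, mulVec_diagonal] at h
    exact (mul_eq_zero.1 h.symm).resolve_left (hlam.trans_le (hgap i hi)).ne'
  have hVu0 : (V *ᵥ u) q₀ ≠ 0 := by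
    intro h0
    have hVu' : V *ᵥ u = 0 := funext fun i => by by_cases hi : i = q₀ <;> simp_all
    have hVuu := unitary_star_mulVec_dotProduct hA.eigenvectorUnitary u u
    rw [hVu', zero_dotProduct, eq_comm, dotProduct_self_eq_zero] at hVuu
    exact hu0 hVuu
  have hVx : (V *ᵥ x) q₀ = 0 := by
    have h := unitary_star_mulVec_dotProduct hA.eigenvectorUnitary x u
    rw [hxu, dotProduct, sum_eq_single q₀ (fun i _ hi => by simp [V, hVu i hi]) (by simp)] at h
    exact (mul_eq_zero.1 h).resolve_right hVu0
  rw [hA.dotProduct_mulVec_eq_sum_eigenvalues,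
    ← unitary_star_mulVec_dotProduct hA.eigenvectorUnitary, dotProduct, mul_sum]
  refine sum_le_sum fun i _ => ?_
  by_cases hi : i = q₀
  · simp [V, hi, hVx]
  · nlinarith [hgap i hi, sq_nonneg ((V *ᵥ x) i)]

end Matrix.IsHermitian

namespace Matrix

structure IsLaplacian (K : Matrix ι ι ℝ) : Prop where
  mulVec_one : K *ᵥ 1 = 0
  nonpos_of_ne : ∀ ⦃i j⦄, i ≠ j → K i j ≤ 0

noncomputable def weightedSymmPart (w : ι → ℝ) (K : Matrix ι ι ℝ) : Matrix ι ι ℝ :=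
  ((1 : ℝ) / 2) • (diagonal w * K + Kᵀ * diagonal w)

theorem dotProduct_weightedSymmPart_mulVec (w : ι → ℝ) (K : Matrix ι ι ℝ) (x : ι → ℝ) :
    x ⬝ᵥ weightedSymmPart w K *ᵥ x = x ⬝ᵥ (diagonal w * K) *ᵥ x := by
  have hT : Kᵀ * diagonal w = (diagonal w * K)ᵀ := by rw [transpose_mul, diagonal_transpose]
  rw [weightedSymmPart, hT, smul_mulVec, add_mulVec, dotProduct_smul, dotProduct_add,
    dotProduct_transpose_mulVec, smul_eq_mul]
  ring

namespace IsLaplacian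

variable {K : Matrix ι ι ℝ}

theorem weightedSymmPart (hK : K.IsLaplacian) {w : ι → ℝ} (hw : ∀ i, 0 ≤ w i)
    (hwK : w ᵥ* K = 0) : (weightedSymmPart w K).IsLaplacian where
  mulVec_one := by
    have hw1 : diagonal w *ᵥ 1 = w := funext fun i => by simp [mulVec_diagonal]
    rw [Matrix.weightedSymmPart, smul_mulVec, add_mulVec, ← mulVec_mulVec, ← mulVec_mulVec,
      hK.mulVec_one, hw1, mulVec_transpose, hwK, mulVec_zero, add_zero, smul_zero]
  nonpos_of_ne i j hij := by
    simp only [Matrix.weightedSymmPart, smul_apply, add_apply, diagonal_mul, mul_diagonal,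
      transpose_apply, smul_eq_mul]
    nlinarith [mul_nonneg (hw i) (neg_nonneg.2 (hK.nonpos_of_ne hij)),
      mul_nonneg (hw j) (neg_nonneg.2 (hK.nonpos_of_ne hij.symm))]

-- Gershgorin: every disc is centred at `K k k ≥ 0` with radius `K k k`.
theorem eigenvalues_nonneg (hK : K.IsLaplacian) (hKh : K.IsHermitian) (i : ι) :
    0 ≤ hKh.eigenvalues i := by
  have hev : Module.End.HasEigenvalue (toLin' K) (hKh.eigenvalues i) := by
    rw [Module.End.hasEigenvalue_iff_mem_spectrum, spectrum_toLin']
    exact hKh.eigenvalues_mem_spectrum_real i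
  obtain ⟨k, hk⟩ := eigenvalue_mem_ball hev
  have hradius : ∑ j ∈ univ.erase k, ‖K k j‖ = K k k := by
    have hrow := congrFun hK.mulVec_one k
    simp only [mulVec, dotProduct, Pi.one_apply, mul_one, Pi.zero_apply] at hrow
    rw [← add_sum_erase _ _ (mem_univ k)] at hrow
    rw [sum_congr rfl fun j hj => Real.norm_of_nonpos
      (hK.nonpos_of_ne (ne_of_mem_erase hj).symm), sum_neg_distrib]
    linarith
  rw [hradius, Metric.mem_closedBall, Real.dist_eq] at hk
  linarith [neg_abs_le (hKh.eigenvalues i - K k k)]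

theorem dotProduct_mulVec_nonneg (hK : K.IsLaplacian) (hKh : K.IsHermitian) (x : ι → ℝ) :
    0 ≤ x ⬝ᵥ K *ᵥ x := by
  rw [hKh.dotProduct_mulVec_eq_sum_eigenvalues]
  exact sum_nonneg fun i _ => mul_nonneg (hK.eigenvalues_nonneg hKh i) (sq_nonneg _)

theorem dotProduct_mulVec_add_sum_nonneg {S : Matrix ι ι ℝ} (hL : S.IsLaplacian)
    (hS : S.IsHermitian) {q₀ : ι} {lam : ℝ} (hgap : ∀ i ≠ q₀, lam ≤ hS.eigenvalues i)
    {w d : ι → ℝ} {s : ℝ} (hw0 : ∀ i, 0 ≤ w i) (hw1 : ∀ i, w i ≤ 1) (hs : ∀ i, s ≤ d i)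
    (hR : 0 < ∑ i, w i * (d i - s))
    (hcond : 0 ≤ lam / ((1 + √(1 + lam / ∑ i, w i * (d i - s))) ^ 2 * Fintype.card ι + 1) + s)
    (x : ι → ℝ) : 0 ≤ x ⬝ᵥ S *ᵥ x + ∑ i, w i * d i * x i ^ 2 := by
  set R := ∑ i, w i * (d i - s)
  rcases le_or_gt 0 s with hs0 | hs0
  · exact add_nonneg (hL.dotProduct_mulVec_nonneg hS x) <| sum_nonneg fun i _ =>
      mul_nonneg (mul_nonneg (hw0 i) (hs0.trans (hs i))) (sq_nonneg _)
  rcases isEmpty_or_nonempty ι with hι | hι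
  · simp
  set N : ℝ := (Fintype.card ι : ℝ)
  have hN : 0 < N := Nat.cast_pos.2 Fintype.card_pos
  have hD : 0 < (1 + √(1 + lam / R)) ^ 2 * N + 1 := by positivity
  have hcond' : -s * ((1 + √(1 + lam / R)) ^ 2 * N + 1) ≤ lam :=
    (le_div_iff₀ hD).1 (by linarith)
  have hlam : 0 < lam := (mul_pos (neg_pos.2 hs0) hD).trans_le hcond'
  set a := (∑ i, x i) / N
  set y := x - a • 1
  have hxy : x = y + a • 1 := by simp [y]
  have hy1 : y ⬝ᵥ 1 = 0 := by
    simp [y, dotProduct_one, sum_sub_distrib, a, N, mul_div_cancel₀ _ hN.ne']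
  have hquad : lam * (y ⬝ᵥ y) ≤ x ⬝ᵥ S *ᵥ x := by
    rw [hxy, hS.dotProduct_add_mulVec_add (by rw [mulVec_smul, hL.mulVec_one, smul_zero])]
    exact hS.mul_dotProduct_self_le_dotProduct_mulVec hL.mulVec_one one_ne_zero hy1 hlam hgap
  have hnorm : x ⬝ᵥ x = N * a ^ 2 + y ⬝ᵥ y := by
    rw [hxy]
    simp only [add_dotProduct, dotProduct_add, smul_dotProduct, dotProduct_smul,
      dotProduct_comm 1 y, hy1, one_dotProduct_one, smul_eq_mul]
    ring
  have hweighted := weighted_sum_sq_lower_bound hw0 hw1 hs hs0.le fun i => by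
    simpa only [y, Pi.sub_apply, Pi.smul_apply, Pi.one_apply, smul_eq_mul, mul_one,
      sub_add_cancel] using sq_max_abs_sub_sqrt_le a y i
  have hbound := quadratic_bound_of_gap_condition (u := √(y ⬝ᵥ y)) hR (neg_pos.2 hs0) hN.le
    (abs_nonneg a) hcond'
  have hyy : 0 ≤ y ⬝ᵥ y := Fintype.sum_nonneg fun i => mul_self_nonneg (y i)
  rw [sq_abs, Real.sq_sqrt hyy] at hbound
  rw [hnorm] at hweighted
  linarith

theorem specAbscissa_neg_sub_diagonal_nonpos (hK : K.IsLaplacian) {w : ι → ℝ}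
    (hw : ∀ i, 0 < w i) (hw1 : ∀ i, w i ≤ 1) (hwK : w ᵥ* K = 0)
    (hS : (Matrix.weightedSymmPart w K).IsHermitian)
    {q₀ : ι} {lam : ℝ} (hgap : ∀ i ≠ q₀, lam ≤ hS.eigenvalues i) {d : ι → ℝ} {s : ℝ}
    (hs : ∀ i, s ≤ d i) (hR : 0 < ∑ i, w i * (d i - s))
    (hcond : 0 ≤ lam / ((1 + √(1 + lam / ∑ i, w i * (d i - s))) ^ 2 * Fintype.card ι + 1) + s) :
    specAbscissa (-K - diagonal d) ≤ 0 := by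
  refine specAbscissa_nonpos_of_dotProduct_diagonal_mul_mulVec_nonpos hw fun x => ?_
  have hΦ := (hK.weightedSymmPart (fun i => (hw i).le) hwK).dotProduct_mulVec_add_sum_nonneg hS
    hgap (fun i => (hw i).le) hw1 hs hR hcond x
  rw [dotProduct_weightedSymmPart_mulVec] at hΦ
  have hsplit : x ⬝ᵥ (diagonal w * (-K - diagonal d)) *ᵥ x
      = -(x ⬝ᵥ (diagonal w * K) *ᵥ x) - ∑ i, w i * d i * x i ^ 2 := by
    rw [mul_sub, mul_neg, sub_mulVec, neg_mulVec, dotProduct_sub, dotProduct_neg,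
      diagonal_mul_diagonal]
    simp only [dotProduct, mulVec_diagonal]
    congr 1
    exact sum_congr rfl fun i _ => by ring
  linarith

end IsLaplacian

end Matrix

end

section

variable {n m : ℕ}

theorem Fstar_nonneg {N : Fin m → ℝ} {piv : Fin m → Fin n → ℝ} (hN : ∀ α, 0 ≤ N α)
    (hpiv : ∀ α i, 0 ≤ piv α i) (q q' : Fin m × Fin n) : 0 ≤ Fstar N piv q q' := by
  rw [Fstar, of_apply]
  split_ifs
  · exact div_nonneg (mul_nonneg (hN _) (hpiv _ _))
      (sum_nonneg fun τ _ => mul_nonneg (hN τ) (hpiv τ _))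
  · exact le_rfl

theorem Fstar_mulVec_one {N : Fin m → ℝ} {piv : Fin m → Fin n → ℝ} (hN : ∀ α, 0 < N α)
    (hpiv : ∀ α i, 0 < piv α i) : Fstar N piv *ᵥ 1 = 1 := by
  ext ⟨α, i⟩
  have hden : ∑ τ, N τ * piv τ i ≠ 0 :=
    (sum_pos (fun τ _ => mul_pos (hN τ) (hpiv τ i)) ⟨α, mem_univ α⟩).ne'
  simp only [mulVec, dotProduct, Pi.one_apply, mul_one, Fintype.sum_prod_type, Fstar, of_apply,
    sum_ite_eq, mem_univ, if_true]
  rw [← sum_div, div_self hden]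

theorem Lstar_nonpos_of_ne {Q : Fin m → Matrix (Fin n) (Fin n) ℝ} {piv : Fin m → Fin n → ℝ}
    (hQoff : ∀ (α : Fin m) (i j : Fin n), i ≠ j → 0 ≤ Q α i j) (hpiv : ∀ α i, 0 ≤ piv α i)
    {q q' : Fin m × Fin n} (hqq' : q ≠ q') : Lstar Q piv q q' ≤ 0 := by
  rw [Lstar, of_apply]
  split_ifs with h1 h2
  · exact absurd (Prod.ext h1 h2) hqq'
  · exact neg_nonpos.2 <| div_nonneg (mul_nonneg (hQoff _ _ _ (Ne.symm h2)) (hpiv _ _)) (hpiv _ _)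
  · exact le_rfl

theorem Lstar_mulVec_one {Q : Fin m → Matrix (Fin n) (Fin n) ℝ} {piv : Fin m → Fin n → ℝ}
    (hQdiag : ∀ (α : Fin m) (i : Fin n), Q α i i = -∑ j ∈ Finset.univ \ {i}, Q α i j)
    (hpiveig : ∀ (α : Fin m) (i : Fin n), ∑ j, Q α j i * piv α j = 0)
    (hpiv : ∀ α i, piv α i ≠ 0) : Lstar Q piv *ᵥ 1 = 0 := by
  ext ⟨α, i⟩
  have hflow : ∑ j ∈ univ.erase i, Q α j i * piv α j
      = (∑ j ∈ univ \ {i}, Q α i j) * piv α i := by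
    have h := hpiveig α i
    rw [← add_sum_erase _ _ (mem_univ i), hQdiag] at h
    linarith
  simp only [mulVec, dotProduct, Pi.one_apply, mul_one, Fintype.sum_prod_type, Lstar, of_apply,
    sum_ite_irrel, sum_const_zero, sum_ite_eq, mem_univ, if_true]
  rw [← add_sum_erase _ _ (mem_univ i), if_pos rfl,
    sum_congr rfl fun j hj => if_neg (ne_of_mem_erase hj).symm, sum_neg_distrib, ← sum_div,
    hflow, mul_div_cancel_right₀ _ (hpiv α i)]
  simp

theorem Kmat_isLaplacian {Q : Fin m → Matrix (Fin n) (Fin n) ℝ} {piv : Fin m → Fin n → ℝ}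
    {N : Fin m → ℝ} {β : Fin m → Fin n → ℝ}
    (hQoff : ∀ (α : Fin m) (i j : Fin n), i ≠ j → 0 ≤ Q α i j)
    (hQdiag : ∀ (α : Fin m) (i : Fin n), Q α i i = -∑ j ∈ Finset.univ \ {i}, Q α i j)
    (hpivpos : ∀ α i, 0 < piv α i)
    (hpiveig : ∀ (α : Fin m) (i : Fin n), ∑ j, Q α j i * piv α j = 0)
    (hN : ∀ α, 0 < N α) (hβ : ∀ α i, 0 ≤ β α i) : (Kmat Q piv N β).IsLaplacian where
  mulVec_one := by
    rw [Kmat, add_mulVec, ← mulVec_mulVec, sub_mulVec, one_mulVec, Fstar_mulVec_one hN hpivpos,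
      sub_self, mulVec_zero, Lstar_mulVec_one hQdiag hpiveig fun α i => (hpivpos α i).ne',
      add_zero]
  nonpos_of_ne q q' hqq' := by
    rw [Kmat, Matrix.add_apply, pairDiag, diagonal_mul, Matrix.sub_apply, one_apply_ne hqq',
      zero_sub, mul_neg]
    exact add_nonpos (neg_nonpos.2 (mul_nonneg (hβ _ _)
      (Fstar_nonneg (fun α => (hN α).le) (fun α i => (hpivpos α i).le) q q')))
      (Lstar_nonpos_of_ne hQoff (fun α i => (hpivpos α i).le) hqq')

theorem pairDiag_mul_Fstar_sub_sub_Lstar (Q : Fin m → Matrix (Fin n) (Fin n) ℝ)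
    (piv : Fin m → Fin n → ℝ) (N : Fin m → ℝ) (β δ : Fin m → Fin n → ℝ) :
    pairDiag β * Fstar N piv - pairDiag δ - Lstar Q piv
      = -Kmat Q piv N β - diagonal fun q => δ q.1 q.2 - β q.1 q.2 := by
  rw [Kmat, show (diagonal fun q : Fin m × Fin n => δ q.1 q.2 - β q.1 q.2)
    = pairDiag δ - pairDiag β from (diagonal_sub _ _).symm, mul_sub, mul_one]
  abel

end

theorem specAbscissa_nonpos_of_lambda2_condition_general
    {n m : ℕ}
    (Q : Fin m → Matrix (Fin n) (Fin n) ℝ)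
    (hQoff : ∀ (α : Fin m) (i j : Fin n), i ≠ j → 0 ≤ Q α i j)
    (hQdiag : ∀ (α : Fin m) (i : Fin n), Q α i i = -∑ j ∈ Finset.univ \ {i}, Q α i j)
    (piv : Fin m → Fin n → ℝ) (hpivpos : ∀ α i, 0 < piv α i)
    (hpiveig : ∀ (α : Fin m) (i : Fin n), ∑ j, Q α j i * piv α j = 0)
    (N : Fin m → ℝ) (hN : ∀ α, 0 < N α)
    (β δ : Fin m → Fin n → ℝ)
    (hβ : ∀ α i, 0 < β α i)
    -- the positive left null vector of `B M + L*`, normalized so `max_k w_k = 1`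
    (w : Fin m × Fin n → ℝ) (hwpos : ∀ q, 0 < w q)
    (hwnull : Matrix.vecMul w (Kmat Q piv N β) = 0)
    (hwle : ∀ q, w q ≤ 1)
    -- `s` is the minimum of `δ^α_i − β^α_i` over all pairs `(i, α)`
    (s : ℝ) (hs_le : ∀ (i : Fin n) (α : Fin m), s ≤ δ α i - β α i)
    -- not all differences equal `s`, so the weighted sum is positive
    (hsum_pos : 0 < ∑ q : Fin m × Fin n, w q * (δ q.1 q.2 - β q.1 q.2 - s))
    -- `λ₂`: the second smallest eigenvalue (with multiplicity) of the symmetric matrix `S`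
    (hS : (Smat Q piv N β w).IsHermitian)
    (q₀ : Fin m × Fin n)
    (lam2 : ℝ)
    (hlam2 : IsLeast {r : ℝ | ∃ q ≠ q₀, hS.eigenvalues q = r} lam2)
    -- the sufficient condition
    (hcond : 0 ≤ lam2 / ((1 + Real.sqrt (1 + lam2 /
        (∑ q : Fin m × Fin n, w q * (δ q.1 q.2 - β q.1 q.2 - s)))) ^ 2 * (n * m : ℝ) + 1)
        + s) :
    specAbscissa (pairDiag β * Fstar N piv - pairDiag δ - Lstar Q piv) ≤ 0 := by
  have hK := Kmat_isLaplacian hQoff hQdiag hpivpos hpiveig hN fun α i => (hβ α i).le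
  rw [pairDiag_mul_Fstar_sub_sub_Lstar]
  refine hK.specAbscissa_neg_sub_diagonal_nonpos hwpos hwle hwnull hS
    (fun q hq => hlam2.2 ⟨q, hq, rfl⟩) (fun q => hs_le q.2 q.1) hsum_pos ?_
  simpa [Fintype.card_prod, mul_comm] using hcond

/-- Let `M = I − F*`, let `w` be the entrywise-positive left null vector
of `B M + L*` normalized so that `max_k w_k = 1`, let `W = diag(w)`,
let `s = min_{(i,α)} (δ^α_i − β^α_i)`, and let `λ₂` be the second smallest eigenvalue of
`(1/2)(W (B M + L*) + (B M + L*)ᵀ W)`. Assume `B M + L*` is irreducible and not all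
differences `δ^α_i − β^α_i` equal `s` (so `∑ w (δ − β − s) > 0`). If
`λ₂ / ((1 + √(1 + λ₂ / ∑ w (δ − β − s)))² nm + 1) + s ≥ 0`, then
`μ(B F* − D − L*) ≤ 0`. -/
theorem specAbscissa_nonpos_of_lambda2_condition
    {n m : ℕ} (hn : 2 ≤ n) (hm : 1 ≤ m)
    (Q : Fin m → Matrix (Fin n) (Fin n) ℝ)
    (hQoff : ∀ (α : Fin m) (i j : Fin n), i ≠ j → 0 ≤ Q α i j)
    (hQdiag : ∀ (α : Fin m) (i : Fin n), Q α i i = -∑ j ∈ Finset.univ \ {i}, Q α i j)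
    (hQirr : ∀ (α : Fin m) (i j : Fin n),
      Relation.ReflTransGen (fun a b => 0 < Q α a b) i j)
    (piv : Fin m → Fin n → ℝ) (hpivpos : ∀ α i, 0 < piv α i)
    (hpiveig : ∀ (α : Fin m) (i : Fin n), ∑ j, Q α j i * piv α j = 0)
    (hpivsum : ∀ α, ∑ i, piv α i = 1)
    (N : Fin m → ℝ) (hN : ∀ α, 0 < N α)
    (β δ : Fin m → Fin n → ℝ)
    (hβ : ∀ α i, 0 < β α i) (hδ : ∀ α i, 0 ≤ δ α i)
    (hδpos : ∀ α, ∃ k, 0 < δ α k)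
    -- `B M + L*` is irreducible
    (hKirr : ∀ q q' : Fin m × Fin n,
      Relation.ReflTransGen (fun a b => a ≠ b ∧ Kmat Q piv N β a b ≠ 0) q q')
    -- the positive left null vector of `B M + L*`, normalized so `max_k w_k = 1`
    (w : Fin m × Fin n → ℝ) (hwpos : ∀ q, 0 < w q)
    (hwnull : Matrix.vecMul w (Kmat Q piv N β) = 0)
    (hwle : ∀ q, w q ≤ 1) (hwmax : ∃ q, w q = 1)
    -- `s` is the minimum of `δ^α_i − β^α_i` over all pairs `(i, α)`
    (s : ℝ) (hs_le : ∀ (i : Fin n) (α : Fin m), s ≤ δ α i - β α i)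
    (hs_mem : ∃ (i : Fin n) (α : Fin m), δ α i - β α i = s)
    -- not all differences equal `s`, so the weighted sum is positive
    (hne : ∃ (i : Fin n) (α : Fin m), δ α i - β α i ≠ s)
    (hsum_pos : 0 < ∑ q : Fin m × Fin n, w q * (δ q.1 q.2 - β q.1 q.2 - s))
    -- `λ₂`: the second smallest eigenvalue (with multiplicity) of the symmetric matrix `S`
    (hS : (Smat Q piv N β w).IsHermitian)
    (q₀ : Fin m × Fin n) (hq₀ : ∀ q, hS.eigenvalues q₀ ≤ hS.eigenvalues q)
    (lam2 : ℝ)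
    (hlam2 : IsLeast {r : ℝ | ∃ q ≠ q₀, hS.eigenvalues q = r} lam2)
    -- the sufficient condition
    (hcond : 0 ≤ lam2 / ((1 + Real.sqrt (1 + lam2 /
        (∑ q : Fin m × Fin n, w q * (δ q.1 q.2 - β q.1 q.2 - s)))) ^ 2 * (n * m : ℝ) + 1)
        + s) :
    specAbscissa (pairDiag β * Fstar N piv - pairDiag δ - Lstar Q piv) ≤ 0 :=
  specAbscissa_nonpos_of_lambda2_condition_general Q hQoff hQdiag piv hpivpos hpiveig N hN β δ hβ w
    hwpos hwnull hwle s hs_le hsum_pos hS q₀ lam2 hlam2 hcond
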